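/- arXiv:math/0310166 — 3 statements merged into one kernel-verified Lean document; each statement's English description precedes it below -/
import Mathlib

section
/- Let E and F be Banach spaces and f : E → F a smooth map with Taylor expansion f(ξ) = f(0) + Df(0)ξ + N(ξ). Suppose Df(0) has a right inverse G : F → E satisfying ‖G N(ξ) − G N(ζ)‖ ≤ C_N(‖ξ‖ + ‖ζ‖)‖ξ − ζ‖ for some constant C_N > 0, and ‖G f(0)‖ ≤ 1/(8 C_N). Then f has a zero in the ball B = {ξ ∈ E : ‖ξ‖ < 1/(4 C_N)}. -/
/-- Newton's method: existence of a zero of `f` in the ball of radius `1/(4C)`. -/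
theorem stmt_0
    {E F : Type*} [NormedAddCommGroup E] [NormedSpace ℝ E] [CompleteSpace E]
    [NormedAddCommGroup F] [NormedSpace ℝ F] [CompleteSpace F]
    (f : E → F) (hf : ContDiff ℝ (⊤ : ℕ∞) f)
    (G : F →L[ℝ] E) (hG : ∀ v, fderiv ℝ f 0 (G v) = v)
    (C : ℝ) (hC : 0 < C)
    (N : E → F) (hN : ∀ ξ, N ξ = f ξ - f 0 - fderiv ℝ f 0 ξ)
    (hGN : ∀ ξ ζ : E, ‖G (N ξ) - G (N ζ)‖ ≤ C * (‖ξ‖ + ‖ζ‖) * ‖ξ - ζ‖)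
    (hGf0 : ‖G (f 0)‖ ≤ 1 / (8 * C)) :
    ∃ ξ : E, ‖ξ‖ < 1 / (4 * C) ∧ f ξ = 0 := by
  have hN0 : N 0 = 0 := by
    rw [hN 0, map_zero]; abel
  set r : ℝ := 3 / (16 * C) with hr
  have hrpos : 0 < r := by positivity
  set Φ : E → E := fun ξ => -(G (f 0)) - G (N ξ) with hΦ
  have hGNbound : ∀ ξ : E, ‖G (N ξ)‖ ≤ C * ‖ξ‖ * ‖ξ‖ := by
    intro ξ
    have := hGN ξ 0
    simpa [hN0] using this
  have hmap : ∀ ξ : E, ξ ∈ Metric.closedBall (0:E) r → Φ ξ ∈ Metric.closedBall (0:E) r := by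
    intro ξ hξ
    rw [Metric.mem_closedBall, dist_zero_right] at hξ ⊢
    have h1 : ‖Φ ξ‖ ≤ ‖G (f 0)‖ + ‖G (N ξ)‖ := by
      simpa [hΦ, sub_eq_add_neg] using norm_add_le (-(G (f 0))) (-(G (N ξ)))
    have h0 : (0:ℝ) ≤ ‖ξ‖ := norm_nonneg _
    have h2 : C * ‖ξ‖ * ‖ξ‖ ≤ C * r * r := by
      have := mul_le_mul hξ hξ h0 hrpos.le
      nlinarith
    have h3 : 1 / (8 * C) + C * r * r ≤ r := by
      have key : 1 / (8 * C) + C * r * r = 41 / (256 * C) := by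
        rw [hr]; field_simp; ring
      rw [key, hr, div_le_div_iff₀ (by positivity) (by positivity)]
      nlinarith
    calc ‖Φ ξ‖ ≤ ‖G (f 0)‖ + ‖G (N ξ)‖ := h1
      _ ≤ 1 / (8 * C) + C * ‖ξ‖ * ‖ξ‖ := add_le_add hGf0 (hGNbound ξ)
      _ ≤ 1 / (8 * C) + C * r * r := by linarith
      _ ≤ r := h3
  haveI : CompleteSpace (Metric.closedBall (0:E) r) :=
    (Metric.isClosed_closedBall).completeSpace_coe
  set ψ : Metric.closedBall (0:E) r → Metric.closedBall (0:E) r :=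
    fun x => ⟨Φ x.1, hmap x.1 x.2⟩ with hψ
  have hlip : LipschitzWith (3/8 : NNReal) ψ := by
    apply LipschitzWith.of_dist_le_mul
    rintro ⟨ξ, hξ⟩ ⟨ζ, hζ⟩
    have hξ' : ‖ξ‖ ≤ r := by rwa [Metric.mem_closedBall, dist_zero_right] at hξ
    have hζ' : ‖ζ‖ ≤ r := by rwa [Metric.mem_closedBall, dist_zero_right] at hζ
    have hd : dist (ψ ⟨ξ, hξ⟩) (ψ ⟨ζ, hζ⟩) = ‖G (N ζ) - G (N ξ)‖ := by
      rw [Subtype.dist_eq]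
      simp only [hψ, hΦ]
      rw [dist_eq_norm]
      congr 1
      abel
    have hds : dist (⟨ξ, hξ⟩ : Metric.closedBall (0:E) r) ⟨ζ, hζ⟩ = ‖ξ - ζ‖ := by
      rw [Subtype.dist_eq, dist_eq_norm]
    rw [hd, hds]
    have hnorm : ‖ζ - ξ‖ = ‖ξ - ζ‖ := norm_sub_rev _ _
    have h0 : (0:ℝ) ≤ ‖ξ - ζ‖ := norm_nonneg _
    have hCr : C * (2 * r) = 3/8 := by
      rw [hr]; field_simp; ring
    have hcoeff : C * (‖ζ‖ + ‖ξ‖) * ‖ξ - ζ‖ ≤ (3/8 : ℝ) * ‖ξ - ζ‖ := by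
      have h1 : C * (‖ζ‖ + ‖ξ‖) ≤ 3/8 := by nlinarith [norm_nonneg ζ, norm_nonneg ξ]
      nlinarith
    have hcast : (((3:NNReal)/8 : NNReal) : ℝ) = (3/8 : ℝ) := by norm_num
    rw [hcast]
    calc ‖G (N ζ) - G (N ξ)‖ ≤ C * (‖ζ‖ + ‖ξ‖) * ‖ζ - ξ‖ := hGN ζ ξ
      _ = C * (‖ζ‖ + ‖ξ‖) * ‖ξ - ζ‖ := by rw [hnorm]
      _ ≤ (3/8 : ℝ) * ‖ξ - ζ‖ := hcoeff
  have hcontr : ContractingWith (3/8 : NNReal) ψ := ⟨by rw [← NNReal.coe_lt_coe]; norm_num, hlip⟩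
  obtain ⟨x, hx, -⟩ := hcontr.exists_fixedPoint
    ⟨0, by simp [Metric.mem_closedBall, hrpos.le]⟩ (edist_ne_top _ _)
  refine ⟨x.1, ?_, ?_⟩
  · have hxr : ‖(x : E)‖ ≤ r := by
      have := x.2
      rwa [Metric.mem_closedBall, dist_zero_right] at this
    have : r < 1 / (4 * C) := by
      rw [hr, div_lt_div_iff₀ (by positivity) (by positivity)]
      nlinarith
    linarith
  · have hfix : Φ (x : E) = (x : E) := congrArg Subtype.val hx
    have hxG : (x : E) = G (-(f 0) - N (x : E)) := by
      rw [map_sub, map_neg]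
      exact hfix.symm
    have hD : fderiv ℝ f 0 (x : E) = -(f 0) - N (x : E) := by
      conv_lhs => rw [hxG]
      exact hG _
    have hfx : f (x : E) = N (x : E) + f 0 + fderiv ℝ f 0 (x : E) := by
      rw [hN]; abel
    rw [hD] at hfx
    rw [hfx]; abel
end

section
/- Let E be a Banach space, π : E → E a bounded linear projection with kernel E₁ and range E₂, F₀ ∈ E₂ a vector, and N : E → E₂ a map with ‖N(ξ) − N(ζ)‖ ≤ C_N(‖ξ‖ + ‖ζ‖)‖ξ − ζ‖. Define 𝓕(ξ) := F₀ + π(ξ) + N(ξ). If ξ = (ξ₁, ξ₂) and ξ' = (ξ₁, ξ₂') are two zeros of 𝓕 in the ball of radius 1/(4C_N) with the same E₁-component ξ₁, then ξ₂ = ξ₂'; i.e., zeros of 𝓕 in that ball are graphs over E₁. -/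
/-- Zeros of `𝓕(ξ) = F₀ + π ξ + N ξ` in the small ball are graphs over `E₁ = ker π`. -/
theorem stmt_3 {E : Type*} [NormedAddCommGroup E] [NormedSpace ℝ E]
    (π : E →L[ℝ] E) (hproj : ∀ x, π (π x) = π x)
    (F₀ : E) (hF₀ : π F₀ = F₀)
    (C : ℝ) (hC : 0 < C)
    (N : E → E) (hNrange : ∀ x, π (N x) = N x)
    (hLip : ∀ ξ ζ : E, ‖N ξ - N ζ‖ ≤ C * (‖ξ‖ + ‖ζ‖) * ‖ξ - ζ‖)
    (ξ ξ' : E) (hξ : ‖ξ‖ < 1 / (4 * C)) (hξ' : ‖ξ'‖ < 1 / (4 * C))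
    (hz : F₀ + π ξ + N ξ = 0) (hz' : F₀ + π ξ' + N ξ' = 0)
    (hsame : ξ - π ξ = ξ' - π ξ') :
    π ξ = π ξ' ∧ ξ = ξ' := by
  have h := hz.trans hz'.symm
  rw [add_assoc, add_assoc] at h
  have h1 : π ξ + N ξ = π ξ' + N ξ' := add_left_cancel h
  have h2 : π ξ - π ξ' = N ξ' - N ξ := by
    rw [sub_eq_sub_iff_add_eq_add, h1, add_comm]
  have h3 : ξ - ξ' = π ξ - π ξ' := by
    rw [← sub_eq_sub_iff_sub_eq_sub]; exact hsame
  have h4 : ‖ξ - ξ'‖ ≤ C * (‖ξ'‖ + ‖ξ‖) * ‖ξ' - ξ‖ := by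
    rw [h3, h2]; exact hLip ξ' ξ
  rw [norm_sub_rev ξ'] at h4
  have hnn : 0 ≤ ‖ξ - ξ'‖ := norm_nonneg _
  have hhalf : C * (‖ξ'‖ + ‖ξ‖) < 1 / 2 := by
    have e : C * (1 / (4 * C)) = 1 / 4 := by field_simp
    nlinarith [mul_lt_mul_of_pos_left hξ hC, mul_lt_mul_of_pos_left hξ' hC]
  have hzero : ‖ξ - ξ'‖ = 0 := by nlinarith
  have heq : ξ = ξ' := sub_eq_zero.mp (norm_eq_zero.mp hzero)
  exact ⟨by rw [heq], heq⟩
end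

section
/- Let ū = (α, u) : Σ → ℝ × M be a pseudo-holomorphic map into the symplectization of a contact manifold (M, λ), where Σ ⊂ ℂ is a domain with coordinates (τ, t). Then α satisfies −Δα · dτ∧dt = −u^*dλ = −(1/2)[g_M(π_ξ u_τ, π_ξ u_τ) + g_M(π_ξ u_t, π_ξ u_t)] dτ∧dt; in particular Δα ≥ 0, i.e. α is subharmonic. -/
/-- Projection onto the contact distribution `ξ = ker λ` along the Reeb field. -/
noncomputable def piXi {V : Type*} [NormedAddCommGroup V] [NormedSpace ℝ V]
    (lam : V → V →L[ℝ] ℝ) (X : V → V) (p v : V) : V :=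
  v - lam p v • X p

/-- The exterior differential `dλ` of the 1-form `lam`. -/
noncomputable def dlam {V : Type*} [NormedAddCommGroup V] [NormedSpace ℝ V]
    (lam : V → V →L[ℝ] ℝ) (p v w : V) : ℝ :=
  fderiv ℝ lam p v w - fderiv ℝ lam p w v

/-- The metric `g_M(h,k) = λ(h)λ(k) + dλ(π_ξ h, I π_ξ k)`. -/
noncomputable def gMet {V : Type*} [NormedAddCommGroup V] [NormedSpace ℝ V]
    (lam : V → V →L[ℝ] ℝ) (X : V → V) (I : V → V →L[ℝ] V) (p h k : V) : ℝ :=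
  lam p h * lam p k + dlam lam p (piXi lam X p h) (I p (piXi lam X p k))

section Aux
variable {V : Type*} [NormedAddCommGroup V] [NormedSpace ℝ V]
  (lam : V → V →L[ℝ] ℝ) (X : V → V)

lemma lam_piXi (hX1 : ∀ p, lam p (X p) = 1) (p v : V) :
    lam p (piXi lam X p v) = 0 := by
  simp [piXi, map_sub, map_smul, hX1 p]

lemma piXi_idem (hX1 : ∀ p, lam p (X p) = 1) (p v : V) :
    piXi lam X p (piXi lam X p v) = piXi lam X p v := by
  rw [piXi, lam_piXi lam X hX1]; simp

lemma dlam_neg_left (p : V) (v w : V) : dlam lam p (-v) w = - dlam lam p v w := by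
  simp [dlam]; ring

lemma dlam_antisymm (p v w : V) : dlam lam p v w = - dlam lam p w v := by
  simp [dlam]

lemma dlam_piXi (hX2 : ∀ p v, dlam lam p (X p) v = 0) (p v w : V) :
    dlam lam p (piXi lam X p v) (piXi lam X p w) = dlam lam p v w := by
  have hv := hX2 p v
  have hw := hX2 p w
  simp only [dlam] at hv hw ⊢
  simp only [piXi, map_sub, map_smul, ContinuousLinearMap.sub_apply,
    ContinuousLinearMap.smul_apply, smul_eq_mul]
  linear_combination (lam p w) * hv - (lam p v) * hw

/-- Key calculus identity. -/
lemma key (hlam : ContDiff ℝ (⊤ : ℕ∞) lam) (u : ℝ × ℝ → V) (hu : ContDiff ℝ (⊤ : ℕ∞) u)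
    (z v w : ℝ × ℝ) :
    fderiv ℝ (fun y => lam (u y) (fderiv ℝ u y w)) z v
      = fderiv ℝ lam (u z) (fderiv ℝ u z v) (fderiv ℝ u z w)
        + lam (u z) (fderiv ℝ (fderiv ℝ u) z v w) := by
  have hud : Differentiable ℝ u := hu.differentiable (by simp)
  have hfd : ContDiff ℝ (⊤ : ℕ∞) (fderiv ℝ u) := hu.fderiv_right (by simp)
  have hc : DifferentiableAt ℝ (fun y => lam (u y)) z :=
    ((hlam.differentiable (by simp)) (u z)).comp z (hud z)
  have hm : DifferentiableAt ℝ (fun y => fderiv ℝ u y w) z :=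
    ((hfd.differentiable (by simp)) z).clm_apply (differentiableAt_const w)
  have h1 : fderiv ℝ (fun y => lam (u y) (fderiv ℝ u y w)) z
      = ((fun y => lam (u y)) z).comp (fderiv ℝ (fun y => fderiv ℝ u y w) z)
        + (fderiv ℝ (fun y => lam (u y)) z).flip (fderiv ℝ u z w) :=
    fderiv_clm_apply hc hm
  have h2 : fderiv ℝ (fun y => lam (u y)) z
      = (fderiv ℝ lam (u z)).comp (fderiv ℝ u z) :=
    fderiv_comp z ((hlam.differentiable (by simp)) (u z)) (hud z)
  have h3 : fderiv ℝ (fun y => fderiv ℝ u y w) z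
      = (fderiv ℝ (fderiv ℝ u) z).flip w := by
    have := fderiv_clm_apply ((hfd.differentiable (by simp)) z) (differentiableAt_const w)
    simpa using this
  rw [h1, h2, h3]
  simp [ContinuousLinearMap.comp_apply, ContinuousLinearMap.flip_apply]
  ring

end Aux

/-- For a pseudo-holomorphic map `ū = (a, u)` into the symplectization,
`Δa = u^*dλ(∂τ,∂t) = (1/2)(g_M(π_ξ u_τ, π_ξ u_τ) + g_M(π_ξ u_t, π_ξ u_t)) ≥ 0`,
i.e. `a` is subharmonic. -/
theorem stmt_10 {V : Type*} [NormedAddCommGroup V] [NormedSpace ℝ V]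
    (lam : V → V →L[ℝ] ℝ) (hlam : ContDiff ℝ (⊤ : ℕ∞) lam)
    (X : V → V) (hX1 : ∀ p, lam p (X p) = 1)
    (hX2 : ∀ p v, dlam lam p (X p) v = 0)
    (I : V → V →L[ℝ] V)
    (hI1 : ∀ p v, I p (I p (piXi lam X p v)) = -(piXi lam X p v))
    (hI2 : ∀ p v, lam p (I p (piXi lam X p v)) = 0)
    (hpos : ∀ p v, 0 ≤ dlam lam p (piXi lam X p v) (I p (piXi lam X p v)))
    (a : ℝ × ℝ → ℝ) (u : ℝ × ℝ → V)
    (ha : ContDiff ℝ (⊤ : ℕ∞) a) (hu : ContDiff ℝ (⊤ : ℕ∞) u)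
    (hPH1 : ∀ z, piXi lam X (u z) (fderiv ℝ u z (1, 0))
        + I (u z) (piXi lam X (u z) (fderiv ℝ u z (0, 1))) = 0)
    (hPH2 : ∀ z, lam (u z) (fderiv ℝ u z (0, 1)) = fderiv ℝ a z (1, 0))
    (hPH3 : ∀ z, lam (u z) (fderiv ℝ u z (1, 0)) = -fderiv ℝ a z (0, 1)) :
    ∀ z : ℝ × ℝ,
      (fderiv ℝ (fun w => fderiv ℝ a w (1, 0)) z (1, 0)
          + fderiv ℝ (fun w => fderiv ℝ a w (0, 1)) z (0, 1)
        = dlam lam (u z) (fderiv ℝ u z (1, 0)) (fderiv ℝ u z (0, 1))) ∧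
      (fderiv ℝ (fun w => fderiv ℝ a w (1, 0)) z (1, 0)
          + fderiv ℝ (fun w => fderiv ℝ a w (0, 1)) z (0, 1)
        = (1 / 2) *
            (gMet lam X I (u z) (piXi lam X (u z) (fderiv ℝ u z (1, 0)))
              (piXi lam X (u z) (fderiv ℝ u z (1, 0)))
            + gMet lam X I (u z) (piXi lam X (u z) (fderiv ℝ u z (0, 1)))
              (piXi lam X (u z) (fderiv ℝ u z (0, 1))))) ∧
      0 ≤ fderiv ℝ (fun w => fderiv ℝ a w (1, 0)) z (1, 0)
          + fderiv ℝ (fun w => fderiv ℝ a w (0, 1)) z (0, 1) := by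
  intro z
  set uτ := fderiv ℝ u z (1, 0) with huτ
  set ut := fderiv ℝ u z (0, 1) with hut
  set P := piXi lam X (u z) uτ with hPdef
  set Q := piXi lam X (u z) ut with hQdef
  -- rewrite the first partials of a
  have e1 : (fun w => fderiv ℝ a w (1, 0))
      = fun w => lam (u w) (fderiv ℝ u w (0, 1)) := funext fun w => (hPH2 w).symm
  have e2 : (fun w => fderiv ℝ a w (0, 1))
      = fun w => -(lam (u w) (fderiv ℝ u w (1, 0))) := by
    funext w; rw [hPH3 w, neg_neg]
  have hsymm : fderiv ℝ (fderiv ℝ u) z (1, 0) (0, 1)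
      = fderiv ℝ (fderiv ℝ u) z (0, 1) (1, 0) :=
    (hu.contDiffAt.isSymmSndFDerivAt (by rw [minSmoothness_of_isRCLikeNormedField]; exact WithTop.coe_le_coe.mpr le_top)) (1, 0) (0, 1)
  have k1 := key lam hlam u hu z (1, 0) (0, 1)
  have k2 := key lam hlam u hu z (0, 1) (1, 0)
  have hneg : fderiv ℝ (fun w => -(lam (u w) (fderiv ℝ u w (1, 0)))) z (0, 1)
      = -(fderiv ℝ (fun w => lam (u w) (fderiv ℝ u w (1, 0))) z (0, 1)) := by
    rw [fderiv_fun_neg]; simp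
  have hΔ : fderiv ℝ (fun w => fderiv ℝ a w (1, 0)) z (1, 0)
      + fderiv ℝ (fun w => fderiv ℝ a w (0, 1)) z (0, 1)
      = dlam lam (u z) uτ ut := by
    rw [e1, e2, hneg, k1, k2, dlam, ← huτ, ← hut, hsymm]
    ring
  -- pointwise algebra
  have hP : P = -(I (u z) Q) := by
    have := hPH1 z
    rw [← huτ, ← hut, ← hPdef, ← hQdef] at this
    exact eq_neg_of_add_eq_zero_left this
  have hIP : I (u z) P = Q := by
    rw [hP, map_neg, hQdef, hI1 (u z) ut, neg_neg]
  have hlamP : lam (u z) P = 0 := lam_piXi lam X hX1 (u z) uτ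
  have hlamQ : lam (u z) Q = 0 := lam_piXi lam X hX1 (u z) ut
  have hPP : piXi lam X (u z) P = P := piXi_idem lam X hX1 (u z) uτ
  have hQQ : piXi lam X (u z) Q = Q := piXi_idem lam X hX1 (u z) ut
  have hdPQ : dlam lam (u z) P Q = dlam lam (u z) Q (I (u z) Q) := by
    rw [hP, dlam_neg_left, dlam_antisymm lam (u z) (I (u z) Q) Q, neg_neg]
  have hgP : gMet lam X I (u z) P P = dlam lam (u z) Q (I (u z) Q) := by
    rw [gMet, hlamP, hPP, hIP, mul_zero, zero_add, hdPQ]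
  have hgQ : gMet lam X I (u z) Q Q = dlam lam (u z) Q (I (u z) Q) := by
    rw [gMet, hlamQ, hQQ, mul_zero, zero_add]
  have hD : dlam lam (u z) uτ ut = dlam lam (u z) Q (I (u z) Q) := by
    rw [← dlam_piXi lam X hX2 (u z) uτ ut, ← hPdef, ← hQdef, hdPQ]
  refine ⟨hΔ, ?_, ?_⟩
  · rw [hΔ, hD, hgP, hgQ]; ring
  · rw [hΔ, hD]
    rw [hQdef]
    exact hpos (u z) ut
end
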